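/- arXiv:1707.07787 — 3 statements merged into one kernel-verified Lean document; each statement's English description precedes it below -/
import Mathlib

section
/- The union of finitely many asymptotically linear subsets of ℝ^n is asymptotically linear. -/
open Filter Topology

noncomputable def l2 {n : ℕ} (x : Fin n → ℝ) : ℝ := Real.sqrt (∑ i, (x i)^2)

noncomputable def l0 {m : ℕ} (y : Fin m → ℝ) : ℕ :=
  (Finset.univ.filter fun i => y i ≠ 0).card

/-- A nonempty closed set `C` is asymptotically linear. -/
def AsympLinear {n : ℕ} (C : Set (Fin n → ℝ)) : Prop :=
  C.Nonempty ∧ IsClosed C ∧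
  ∀ ρ : ℝ, 0 < ρ → ∀ (x : ℕ → Fin n → ℝ) (xb : Fin n → ℝ),
    (∀ k, x k ∈ C) →
    Tendsto (fun k => l2 (x k)) atTop atTop →
    Tendsto (fun k => (l2 (x k))⁻¹ • x k) atTop (𝓝 xb) →
    ∃ k0 : ℕ, ∀ k ≥ k0, x k - ρ • xb ∈ C

/-! Each piece `C i` of the union sees only the subsequence of terms lying in it. Along that
subsequence the norms still diverge and the normalized terms still converge to the same
direction, so the shifted terms eventually return to `C i`; with finitely many pieces, all of
these tails start after a common index. -/

theorem Filter.eventually_imp_of_forall_strictMono {p q : ℕ → Prop}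
    (h : ∀ φ : ℕ → ℕ, StrictMono φ → (∀ m, p (φ m)) → ∀ᶠ m in atTop, q (φ m)) :
    ∀ᶠ k in atTop, p k → q k := by
  by_contra hnot
  have hfreq : ∃ᶠ k in atTop, p k ∧ ¬q k := by
    simpa only [not_eventually, Classical.not_imp] using hnot
  obtain ⟨φ, hφ, hpq⟩ := extraction_of_frequently_atTop hfreq
  obtain ⟨m, hm⟩ := (h φ hφ fun m => (hpq m).1).exists
  exact (hpq m).2 hm

theorem AsympLinear.eventually_sub_smul_mem {n : ℕ} {C : Set (Fin n → ℝ)} (hC : AsympLinear C)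
    {ρ : ℝ} (hρ : 0 < ρ) {x : ℕ → Fin n → ℝ} {xb : Fin n → ℝ}
    (hnorm : Tendsto (fun k => l2 (x k)) atTop atTop)
    (hdir : Tendsto (fun k => (l2 (x k))⁻¹ • x k) atTop (𝓝 xb)) :
    ∀ᶠ k in atTop, x k ∈ C → x k - ρ • xb ∈ C := by
  refine eventually_imp_of_forall_strictMono fun φ hφ hxφ => ?_
  obtain ⟨k0, hk0⟩ := hC.2.2 ρ hρ (x ∘ φ) xb hxφ
    (hnorm.comp hφ.tendsto_atTop) (hdir.comp hφ.tendsto_atTop)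
  exact eventually_atTop.mpr ⟨k0, hk0⟩

/-- The union of finitely many asymptotically linear subsets of ℝ^n is asymptotically linear. -/
theorem asympLinear_finite_union (n : ℕ) (ι : Type) (S : Finset ι) (hS : S.Nonempty)
    (C : ι → Set (Fin n → ℝ)) (hC : ∀ i ∈ S, AsympLinear (C i)) :
    AsympLinear (⋃ i ∈ S, C i) := by
  refine ⟨?_, S.finite_toSet.isClosed_biUnion fun i hi => (hC i hi).2.1, ?_⟩
  · obtain ⟨i, hi⟩ := hS
    exact (hC i hi).1.mono (Set.subset_biUnion_of_mem (u := C) hi)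
  · intro ρ hρ x xb hx hnorm hdir
    have hpieces : ∀ᶠ k in atTop, ∀ i ∈ S, x k ∈ C i → x k - ρ • xb ∈ C i :=
      S.eventually_all.mpr fun i hi => (hC i hi).eventually_sub_smul_mem hρ hnorm hdir
    obtain ⟨k0, hk0⟩ := eventually_atTop.mp hpieces
    refine ⟨k0, fun k hk => ?_⟩
    obtain ⟨i, hi, hxi⟩ := Set.mem_iUnion₂.mp (hx k)
    exact Set.mem_biUnion hi (hk0 k hk i hi hxi)
end

section
/- Let g : ℝ^n → ℝ ∪ {+∞} be asymptotically level stable, A ∈ ℝ^{t×n}, b ∈ ℝ^t, λ > 0. Then f = g + λ‖A· − b‖₀ is asymptotically level stable. -/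
open Filter Topology

/-- Asymptotic function `f_∞(x) = liminf_{x'→x, t→+∞} f(t x')/t`. -/
noncomputable def asympFn {n : ℕ} (f : (Fin n → ℝ) → EReal) (x : Fin n → ℝ) : EReal :=
  Filter.liminf (fun p : (Fin n → ℝ) × ℝ => f (p.2 • p.1) / (p.2 : EReal)) ((𝓝 x) ×ˢ atTop)

/-- Asymptotically level stable function. -/
def ALS {n : ℕ} (f : (Fin n → ℝ) → EReal) : Prop :=
  ∀ ρ : ℝ, 0 < ρ → ∀ t : ℕ → ℝ, (∃ M : ℝ, ∀ k, |t k| ≤ M) →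
  ∀ (x : ℕ → Fin n → ℝ) (xb : Fin n → ℝ),
    (∀ k, f (x k) ≤ (t k : EReal)) →
    Tendsto (fun k => l2 (x k)) atTop atTop →
    Tendsto (fun k => (l2 (x k))⁻¹ • x k) atTop (𝓝 xb) →
    asympFn f xb = 0 →
    ∃ k0 : ℕ, ∀ k ≥ k0, f (x k - ρ • xb) ≤ (t k : EReal)

/-
A bounded real perturbation `h` is invisible to the asymptotic function, since `h(s y)/s → 0` as
`s → ∞`; so `(g + h)_∞ = g_∞`. Given a sequence with `(g + h)(xₖ) ≤ tₖ`, apply the level stability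
of `g` to the shifted bounded levels `tₖ - h(xₖ)`. It then suffices that `h(xₖ - ρ x̄) ≤ h(xₖ)`
eventually. For `h = λ‖A· − b‖₀` this holds for every direction `x̄`: if `(A x̄)ᵢ ≠ 0` then
`|(A xₖ)ᵢ| ≈ ‖xₖ‖ |(A x̄)ᵢ| → ∞`, so `(A xₖ - b)ᵢ ≠ 0` eventually, while coordinates with
`(A x̄)ᵢ = 0` are unchanged by the shift; hence the support can only shrink.
-/

open Matrix

lemma EReal.liminf_add_of_tendsto_zero {α : Type*} {l : Filter α} [l.NeBot] {u v : α → EReal}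
    (hv : Tendsto v l (𝓝 0)) : liminf (u + v) l = liminf u l := by
  have hinf : liminf v l = 0 := hv.liminf_eq
  have hsup : limsup v l = 0 := hv.limsup_eq
  apply le_antisymm
  · calc liminf (u + v) l = liminf (v + u) l := by rw [add_comm]
      _ ≤ limsup v l + liminf u l :=
          EReal.liminf_add_le (.inl (by simp [hsup])) (.inl (by simp [hsup]))
      _ = liminf u l := by rw [hsup, zero_add]
  · calc liminf u l = liminf u l + liminf v l := by rw [hinf, add_zero]
      _ ≤ liminf (u + v) l := EReal.le_liminf_add

lemma tendsto_div_snd_of_bounded {n : ℕ} {h : (Fin n → ℝ) → ℝ} {C : ℝ} (hC : ∀ y, |h y| ≤ C)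
    (x : Fin n → ℝ) :
    Tendsto (fun p : (Fin n → ℝ) × ℝ => h (p.2 • p.1) / p.2) ((𝓝 x) ×ˢ atTop) (𝓝 0) := by
  have hinv : Tendsto (fun p : (Fin n → ℝ) × ℝ => C * p.2⁻¹) ((𝓝 x) ×ˢ atTop) (𝓝 0) := by
    simpa using (tendsto_inv_atTop_zero.comp tendsto_snd).const_mul C
  refine squeeze_zero_norm' ?_ hinv
  filter_upwards [(eventually_gt_atTop (0 : ℝ)).prod_inr (𝓝 x)] with p hp
  rw [Real.norm_eq_abs, abs_div, abs_of_pos hp, div_eq_mul_inv]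
  exact mul_le_mul_of_nonneg_right (hC _) (inv_nonneg.2 hp.le)

lemma asympFn_add_of_bounded {n : ℕ} (f : (Fin n → ℝ) → EReal) {h : (Fin n → ℝ) → ℝ} {C : ℝ}
    (hC : ∀ y, |h y| ≤ C) (x : Fin n → ℝ) :
    asympFn (fun y => f y + h y) x = asympFn f x := by
  have hsplit : (fun p : (Fin n → ℝ) × ℝ => (f (p.2 • p.1) + h (p.2 • p.1)) / (p.2 : EReal))
      =ᶠ[(𝓝 x) ×ˢ atTop] (fun p => f (p.2 • p.1) / (p.2 : EReal)) +
        fun p => ((h (p.2 • p.1) / p.2 : ℝ) : EReal) := by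
    filter_upwards [(eventually_ge_atTop (0 : ℝ)).prod_inr (𝓝 x)] with p hp
    rw [Pi.add_apply, EReal.add_div_of_nonneg_right (by exact_mod_cast hp), EReal.coe_div]
  rw [asympFn, asympFn, liminf_congr hsplit]
  exact EReal.liminf_add_of_tendsto_zero
    (EReal.tendsto_coe.2 (tendsto_div_snd_of_bounded hC x))

def AsymptoticallyNonincreasing {n : ℕ} (h : (Fin n → ℝ) → ℝ) : Prop :=
  ∀ ρ : ℝ, 0 < ρ → ∀ (x : ℕ → Fin n → ℝ) (xb : Fin n → ℝ),
    Tendsto (fun k => l2 (x k)) atTop atTop →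
    Tendsto (fun k => (l2 (x k))⁻¹ • x k) atTop (𝓝 xb) →
    ∀ᶠ k in atTop, h (x k - ρ • xb) ≤ h (x k)

theorem ALS.add_of_bounded {n : ℕ} {f : (Fin n → ℝ) → EReal} (hf : ALS f)
    {h : (Fin n → ℝ) → ℝ} {C : ℝ} (hC : ∀ y, |h y| ≤ C) (hdec : AsymptoticallyNonincreasing h) :
    ALS (fun y => f y + h y) := by
  intro ρ hρ t ⟨M, hM⟩ x xb hle hl2 hdir hasym
  have hf0 : asympFn f xb = 0 := (asympFn_add_of_bounded f hC xb).symm.trans hasym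
  have hlevels : ∀ k, |t k - h (x k)| ≤ M + C := fun k =>
    (abs_sub _ _).trans (add_le_add (hM k) (hC _))
  have hfle : ∀ k, f (x k) ≤ ((t k - h (x k) : ℝ) : EReal) := fun k => by
    rw [EReal.coe_sub, EReal.le_sub_iff_add_le (.inl (EReal.coe_ne_bot _))
      (.inl (EReal.coe_ne_top _))]
    exact hle k
  obtain ⟨k0, hk0⟩ := hf ρ hρ _ ⟨M + C, hlevels⟩ x xb hfle hl2 hdir hf0
  obtain ⟨k1, hk1⟩ := eventually_atTop.1 (hdec ρ hρ x xb hl2 hdir)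
  refine ⟨max k0 k1, fun k hk => ?_⟩
  calc f (x k - ρ • xb) + h (x k - ρ • xb)
      ≤ ((t k - h (x k) : ℝ) : EReal) + h (x k) :=
        add_le_add (hk0 k (le_of_max_le_left hk)) (by exact_mod_cast hk1 k (le_of_max_le_right hk))
    _ = t k := by rw [← EReal.coe_add, sub_add_cancel]

lemma l0_le {m : ℕ} (y : Fin m → ℝ) : l0 y ≤ m :=
  (Finset.card_filter_le _ _).trans_eq (Finset.card_fin m)

lemma l0_mono {m : ℕ} {y z : Fin m → ℝ} (h : ∀ i, y i ≠ 0 → z i ≠ 0) : l0 y ≤ l0 z :=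
  Finset.card_le_card (Finset.monotone_filter_right _ fun i _ => h i)

lemma eventually_ne_of_tendsto_inv_mul {α : Type*} {l : Filter α} {r u : α → ℝ} {c : ℝ}
    (hr : Tendsto r l atTop) (hu : Tendsto (fun k => (r k)⁻¹ * u k) l (𝓝 c)) (hc : c ≠ 0)
    (β : ℝ) : ∀ᶠ k in l, u k ≠ β := by
  have hgrow : Tendsto (fun k => |(r k)⁻¹ * u k| * r k) l atTop :=
    Tendsto.pos_mul_atTop (abs_pos.2 hc) hu.abs hr
  filter_upwards [hgrow.eventually_gt_atTop |β|, hr.eventually_gt_atTop 0] with k hk hrk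
  rw [abs_mul, abs_inv, abs_of_pos hrk, mul_comm _ (r k), mul_inv_cancel_left₀ hrk.ne'] at hk
  rintro rfl
  exact hk.false

lemma eventually_l0_mulVec_sub_smul_le {m n : ℕ} (A : Matrix (Fin m) (Fin n) ℝ) (b : Fin m → ℝ)
    (ρ : ℝ) {x : ℕ → Fin n → ℝ} {xb : Fin n → ℝ}
    (hl2 : Tendsto (fun k => l2 (x k)) atTop atTop)
    (hdir : Tendsto (fun k => (l2 (x k))⁻¹ • x k) atTop (𝓝 xb)) :
    ∀ᶠ k in atTop, l0 (A *ᵥ (x k - ρ • xb) - b) ≤ l0 (A *ᵥ x k - b) := by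
  have hcoord : ∀ i, Tendsto (fun k => (l2 (x k))⁻¹ * (A *ᵥ x k) i) atTop (𝓝 ((A *ᵥ xb) i)) := by
    intro i
    have hA : Continuous fun v : Fin n → ℝ => A *ᵥ v := continuous_const.matrix_mulVec continuous_id
    have := tendsto_pi_nhds.1 ((hA.tendsto xb).comp hdir) i
    simpa [Function.comp_def, Matrix.mulVec_smul] using this
  have hsupp : ∀ᶠ k in atTop, ∀ i, (A *ᵥ xb) i ≠ 0 → (A *ᵥ x k - b) i ≠ 0 := by
    refine eventually_all.2 fun i => ?_
    by_cases hi : (A *ᵥ xb) i = 0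
    · exact .of_forall fun _ h => absurd hi h
    · filter_upwards [eventually_ne_of_tendsto_inv_mul hl2 (hcoord i) hi (b i)] with k hk _
      exact sub_ne_zero.2 hk
  filter_upwards [hsupp] with k hk
  refine l0_mono fun i hi => ?_
  by_cases h0 : (A *ᵥ xb) i = 0
  · simpa [Matrix.mulVec_sub, Matrix.mulVec_smul, h0] using hi
  · exact hk i h0

/-- If `g` is asymptotically level stable, so is `g + λ‖A· − b‖₀`. -/
theorem ALS_add_l0 (t n : ℕ) (g : (Fin n → ℝ) → EReal) (hg : ALS g)
    (A : Matrix (Fin t) (Fin n) ℝ) (b : Fin t → ℝ) (lam : ℝ) (hlam : 0 < lam) :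
    ALS (fun x => g x + ((lam * (l0 (A.mulVec x - b) : ℝ) : ℝ) : EReal)) := by
  have hbound : ∀ y, |lam * (l0 (A *ᵥ y - b) : ℝ)| ≤ lam * t := fun y => by
    rw [abs_of_nonneg (by positivity)]
    exact mul_le_mul_of_nonneg_left (by exact_mod_cast l0_le _) hlam.le
  refine hg.add_of_bounded hbound fun ρ _ x xb hl2 hdir => ?_
  filter_upwards [eventually_l0_mulVec_sub_smul_le A b ρ hl2 hdir] with k hk
  exact mul_le_mul_of_nonneg_left (by exact_mod_cast hk) hlam.le
end

section
/- Let φ : ℝ^n → ℝ ∪ {+∞} be proper, lower semicontinuous, asymptotically level stable and bounded below, let B ∈ ℝ^{m×n}, λ > 0, γ > 0, p > 0. Then Ψ_γ(x) = φ(x) + λ Σ_{i=1}^m min(γ|(Bx)_i|^p, 1) is asymptotically level stable and bounded below; consequently Ψ_γ attains its infimum on ℝ^n. -/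
/-!
The penalty `Ψ_γ - φ` is bounded, and along a sequence `x k` escaping to infinity in the
direction `d` each capped term is either untouched by the step `x k ↦ x k - ρ • d` (when
`(B d)_i = 0`) or eventually saturated at `1` both before and after it; hence level stability
passes from `φ` to `Ψ_γ`. For a function bounded below the kernel condition in `ALS` holds
automatically at every such direction `d`.

Attainment: pick points of minimal norm in the sublevel sets `{f ≤ inf f + 1/(k+1)}`. If they
escaped to infinity in a direction `d`, level stability would put `x k - d` in the same
sublevel set, yet `‖x k - d‖ < ‖x k‖` eventually. So they have a cluster point, which is a
minimizer by lower semicontinuity.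
-/

open Filter Topology

/-- The capped ℓp regularized objective. -/
noncomputable def Psi {n m : ℕ} (φ : (Fin n → ℝ) → EReal) (B : Matrix (Fin m) (Fin n) ℝ)
    (lam γ p : ℝ) (x : Fin n → ℝ) : EReal :=
  φ x + ((lam * ∑ i, min (γ * |B.mulVec x i| ^ p) 1 : ℝ) : EReal)

section

variable {n : ℕ}

lemma l2_eq_norm (x : Fin n → ℝ) : l2 x = ‖WithLp.toLp 2 x‖ := by
  simp [l2, EuclideanSpace.norm_eq]

lemma norm_le_l2 (x : Fin n → ℝ) : ‖x‖ ≤ l2 x := by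
  rw [l2_eq_norm]
  exact (pi_norm_le_iff_of_nonneg (norm_nonneg _)).2 (PiLp.norm_apply_le (WithLp.toLp 2 x))

lemma continuous_l2 : Continuous (l2 (n := n)) := by
  simp only [funext l2_eq_norm]
  fun_prop

lemma exists_isMinOn_l2 {s : Set (Fin n → ℝ)} (hs : IsClosed s) (hne : s.Nonempty) :
    ∃ x ∈ s, IsMinOn l2 s x := by
  obtain ⟨x₀, hx₀⟩ := hne
  refine continuous_l2.continuousOn.exists_isMinOn' hs hx₀ ?_
  have : Tendsto l2 (cocompact (Fin n → ℝ)) atTop :=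
    tendsto_atTop_mono norm_le_l2 tendsto_norm_cocompact_atTop
  exact (this.eventually_ge_atTop _).filter_mono inf_le_left

lemma exists_tendsto_subseq_of_frequently_l2_le {x : ℕ → Fin n → ℝ} {R : ℝ}
    (h : ∃ᶠ k in atTop, l2 (x k) ≤ R) :
    ∃ xs, ∃ σ : ℕ → ℕ, StrictMono σ ∧ Tendsto (x ∘ σ) atTop (𝓝 xs) := by
  obtain ⟨σ, hσ, hσR⟩ := extraction_of_frequently_atTop h
  have hmem : ∀ k, x (σ k) ∈ Metric.closedBall 0 R := fun k => by
    simpa using (norm_le_l2 _).trans (hσR k)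
  obtain ⟨xs, -, τ, hτ, hlim⟩ := (isCompact_closedBall (0 : Fin n → ℝ) R).tendsto_subseq hmem
  exact ⟨xs, σ ∘ τ, hσ.comp hτ, hlim⟩

lemma eventually_norm_sub_smul_lt {E : Type*} [NormedAddCommGroup E] [InnerProductSpace ℝ E]
    {x : ℕ → E} {d : E} {ρ : ℝ} (hρ : 0 < ρ) (hnorm : Tendsto (fun k => ‖x k‖) atTop atTop)
    (hdir : Tendsto (fun k => ‖x k‖⁻¹ • x k) atTop (𝓝 d)) :
    ∀ᶠ k in atTop, ‖x k - ρ • d‖ < ‖x k‖ := by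
  have hd : ‖d‖ = 1 := by
    refine tendsto_nhds_unique ((continuous_norm.tendsto d).comp hdir)
      (tendsto_const_nhds.congr' ?_)
    filter_upwards [hnorm.eventually_gt_atTop 0] with k hk
    simp [norm_smul, hk.ne']
  have hinner : Tendsto (fun k => inner ℝ (‖x k‖⁻¹ • x k) d) atTop (𝓝 1) := by
    simpa [real_inner_self_eq_norm_sq, hd] using
      hdir.inner (𝕜 := ℝ) (tendsto_const_nhds (x := d))
  filter_upwards [hnorm.eventually_gt_atTop ρ,
    hinner.eventually (eventually_gt_nhds one_half_lt_one)] with k hk hk'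
  have hpos : 0 < ‖x k‖ := hρ.trans hk
  rw [real_inner_smul_left, lt_inv_mul_iff₀ hpos] at hk'
  refine lt_of_pow_lt_pow_left₀ 2 (norm_nonneg _) ?_
  rw [norm_sub_sq_real, real_inner_smul_right, norm_smul, hd, Real.norm_of_nonneg hρ.le]
  nlinarith

lemma eventually_l2_sub_smul_lt {x : ℕ → Fin n → ℝ} {d : Fin n → ℝ} {ρ : ℝ} (hρ : 0 < ρ)
    (hnorm : Tendsto (fun k => l2 (x k)) atTop atTop)
    (hdir : Tendsto (fun k => (l2 (x k))⁻¹ • x k) atTop (𝓝 d)) :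
    ∀ᶠ k in atTop, l2 (x k - ρ • d) < l2 (x k) := by
  simp only [l2_eq_norm] at *
  simpa using eventually_norm_sub_smul_lt hρ hnorm
    (((PiLp.continuous_toLp 2 _).tendsto d).comp hdir)

lemma asympFn_nonneg {f : (Fin n → ℝ) → EReal} {c : ℝ} (hc : ∀ x, (c : EReal) ≤ f x)
    (d : Fin n → ℝ) : 0 ≤ asympFn f d := by
  have hlim : Tendsto (fun q : (Fin n → ℝ) × ℝ => ((c / q.2 : ℝ) : EReal)) ((𝓝 d) ×ˢ atTop)
      (𝓝 0) :=
    (continuous_coe_real_ereal.tendsto 0).comp (tendsto_const_nhds.div_atTop tendsto_snd)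
  rw [asympFn, ← hlim.liminf_eq]
  refine liminf_le_liminf ?_
  filter_upwards [tendsto_snd.eventually (eventually_gt_atTop 0)] with q hq
  rw [EReal.coe_div]
  exact EReal.div_le_div_right_of_nonneg (by exact_mod_cast hq.le) (hc _)

lemma asympFn_nonpos {f : (Fin n → ℝ) → EReal} {t : ℕ → ℝ} {M : ℝ} (hM : ∀ k, |t k| ≤ M)
    {x : ℕ → Fin n → ℝ} {d : Fin n → ℝ} (hfx : ∀ k, f (x k) ≤ (t k : EReal))
    (hnorm : Tendsto (fun k => l2 (x k)) atTop atTop)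
    (hdir : Tendsto (fun k => (l2 (x k))⁻¹ • x k) atTop (𝓝 d)) :
    asympFn f d ≤ 0 := by
  have hlim : Tendsto (fun k => ((t k * (l2 (x k))⁻¹ : ℝ) : EReal)) atTop (𝓝 0) :=
    (continuous_coe_real_ereal.tendsto 0).comp <|
      isBoundedUnder_le_mul_tendsto_zero ⟨M, eventually_map.2 (.of_forall hM)⟩
        (tendsto_inv_atTop_zero.comp hnorm)
  calc asympFn f d
      ≤ liminf (fun k => f (l2 (x k) • (l2 (x k))⁻¹ • x k) / (l2 (x k) : EReal)) atTop :=
        (hdir.prodMk hnorm).liminf_le_liminf_comp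
    _ ≤ liminf (fun k => ((t k * (l2 (x k))⁻¹ : ℝ) : EReal)) atTop := by
        refine liminf_le_liminf ?_
        filter_upwards [hnorm.eventually_gt_atTop 0] with k hk
        rw [smul_inv_smul₀ hk.ne', ← div_eq_mul_inv, EReal.coe_div]
        exact EReal.div_le_div_right_of_nonneg (by exact_mod_cast hk.le) (hfx k)
    _ = 0 := hlim.liminf_eq

lemma asympFn_eq_zero {f : (Fin n → ℝ) → EReal} {c : ℝ} (hc : ∀ x, (c : EReal) ≤ f x)
    {t : ℕ → ℝ} {M : ℝ} (hM : ∀ k, |t k| ≤ M)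
    {x : ℕ → Fin n → ℝ} {d : Fin n → ℝ} (hfx : ∀ k, f (x k) ≤ (t k : EReal))
    (hnorm : Tendsto (fun k => l2 (x k)) atTop atTop)
    (hdir : Tendsto (fun k => (l2 (x k))⁻¹ • x k) atTop (𝓝 d)) :
    asympFn f d = 0 :=
  (asympFn_nonpos hM hfx hnorm hdir).antisymm (asympFn_nonneg hc d)

def AsympTranslationInvariant (g : (Fin n → ℝ) → ℝ) : Prop :=
  ∀ (ρ : ℝ) (x : ℕ → Fin n → ℝ) (d : Fin n → ℝ),
    Tendsto (fun k => l2 (x k)) atTop atTop →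
    Tendsto (fun k => (l2 (x k))⁻¹ • x k) atTop (𝓝 d) →
    ∀ᶠ k in atTop, g (x k - ρ • d) = g (x k)

lemma ALS.add {f : (Fin n → ℝ) → EReal} {g : (Fin n → ℝ) → ℝ} (hf : ALS f) {c : ℝ}
    (hc : ∀ x, (c : EReal) ≤ f x) {C : ℝ} (hC : ∀ x, |g x| ≤ C)
    (hg : AsympTranslationInvariant g) :
    ALS fun x => f x + (g x : EReal) := by
  have add_le_iff (x : Fin n → ℝ) (s : ℝ) : f x + (g x : EReal) ≤ s ↔ f x ≤ (s - g x : ℝ) := by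
    rw [EReal.coe_sub, EReal.le_sub_iff_add_le (.inl (EReal.coe_ne_bot _))
      (.inl (EReal.coe_ne_top _))]
  intro ρ hρ t ⟨M, hM⟩ x d hfgx hnorm hdir _
  have hfx (k : ℕ) : f (x k) ≤ (t k - g (x k) : ℝ) := (add_le_iff _ _).1 (hfgx k)
  have hM' (k : ℕ) : |t k - g (x k)| ≤ M + C := (abs_sub _ _).trans (add_le_add (hM k) (hC _))
  obtain ⟨k₀, hk₀⟩ := hf ρ hρ _ ⟨M + C, hM'⟩ x d hfx hnorm hdir
    (asympFn_eq_zero hc hM' hfx hnorm hdir)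
  obtain ⟨k₁, hk₁⟩ := eventually_atTop.1 (hg ρ x d hnorm hdir)
  refine ⟨max k₀ k₁, fun k hk => ?_⟩
  rw [add_le_iff, hk₁ k (le_of_max_le_right hk)]
  exact hk₀ k (le_of_max_le_left hk)

lemma tendsto_abs_apply_atTop {ℓ : (Fin n → ℝ) →ₗ[ℝ] ℝ} {x : ℕ → Fin n → ℝ} {d : Fin n → ℝ}
    (hd : ℓ d ≠ 0) (hnorm : Tendsto (fun k => l2 (x k)) atTop atTop)
    (hdir : Tendsto (fun k => (l2 (x k))⁻¹ • x k) atTop (𝓝 d)) :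
    Tendsto (fun k => |ℓ (x k)|) atTop atTop := by
  have hℓ : Tendsto (fun k => |ℓ ((l2 (x k))⁻¹ • x k)| * l2 (x k)) atTop atTop :=
    Tendsto.pos_mul_atTop (abs_pos.2 hd)
      (((continuous_abs.comp ℓ.continuous_of_finiteDimensional).tendsto d).comp hdir) hnorm
  refine hℓ.congr' ?_
  filter_upwards [hnorm.eventually_gt_atTop 0] with k hk
  rw [map_smul, smul_eq_mul, abs_mul, abs_of_pos (inv_pos.2 hk), mul_comm,
    mul_inv_cancel_left₀ hk.ne']

lemma eventually_comp_abs_apply_sub_smul_eq {h : ℝ → ℝ} {c : ℝ} (hh : ∀ᶠ s in atTop, h s = c)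
    (ℓ : (Fin n → ℝ) →ₗ[ℝ] ℝ) (ρ : ℝ) {x : ℕ → Fin n → ℝ} {d : Fin n → ℝ}
    (hnorm : Tendsto (fun k => l2 (x k)) atTop atTop)
    (hdir : Tendsto (fun k => (l2 (x k))⁻¹ • x k) atTop (𝓝 d)) :
    ∀ᶠ k in atTop, h |ℓ (x k - ρ • d)| = h |ℓ (x k)| := by
  by_cases hd : ℓ d = 0
  · simp [hd]
  have h₁ := tendsto_abs_apply_atTop hd hnorm hdir
  have h₂ : Tendsto (fun k => |ℓ (x k - ρ • d)|) atTop atTop := by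
    refine tendsto_atTop_mono (fun k => ?_) (tendsto_atTop_add_const_right _ (-|ρ * ℓ d|) h₁)
    rw [map_sub, map_smul, smul_eq_mul]
    linarith [abs_sub_abs_le_abs_sub (ℓ (x k)) (ρ * ℓ d)]
  filter_upwards [h₁.eventually hh, h₂.eventually hh] with k hk₁ hk₂
  rw [hk₁, hk₂]

lemma eventually_min_mul_rpow_eq_one {γ p : ℝ} (hγ : 0 < γ) (hp : 0 < p) :
    ∀ᶠ s in atTop, min (γ * s ^ p) 1 = 1 :=
  ((tendsto_rpow_atTop hp).const_mul_atTop hγ |>.eventually_ge_atTop 1).mono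
    fun _ hs => min_eq_right hs

lemma AsympTranslationInvariant.const_mul {g : (Fin n → ℝ) → ℝ}
    (hg : AsympTranslationInvariant g) (a : ℝ) : AsympTranslationInvariant fun x => a * g x :=
  fun ρ x d hnorm hdir => (hg ρ x d hnorm hdir).mono fun _ hk => congrArg (a * ·) hk

/-- `Psi φ B lam γ p x` is definitionally `φ x + lam * cappedLpPenalty B γ p x`. -/
noncomputable def cappedLpPenalty {m : ℕ} (B : Matrix (Fin m) (Fin n) ℝ) (γ p : ℝ)
    (x : Fin n → ℝ) : ℝ :=
  ∑ i, min (γ * |B.mulVec x i| ^ p) 1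

section cappedLpPenalty

variable {m : ℕ} (B : Matrix (Fin m) (Fin n) ℝ)

lemma continuous_cappedLpPenalty (γ : ℝ) {p : ℝ} (hp : 0 < p) :
    Continuous (cappedLpPenalty B γ p) := by
  unfold cappedLpPenalty
  fun_prop (disch := positivity)

lemma abs_mul_cappedLpPenalty_le (lam : ℝ) {γ : ℝ} (hγ : 0 ≤ γ) (p : ℝ) (x : Fin n → ℝ) :
    |lam * cappedLpPenalty B γ p x| ≤ |lam| * m := by
  have hterm (i : Fin m) : 0 ≤ min (γ * |B.mulVec x i| ^ p) 1 := by positivity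
  rw [abs_mul, cappedLpPenalty, abs_of_nonneg (Finset.sum_nonneg fun i _ => hterm i)]
  gcongr
  calc ∑ i, min (γ * |B.mulVec x i| ^ p) 1 ≤ ∑ _i : Fin m, (1 : ℝ) :=
        Finset.sum_le_sum fun i _ => min_le_right _ _
    _ = m := by simp

lemma asympTranslationInvariant_cappedLpPenalty {γ p : ℝ} (hγ : 0 < γ) (hp : 0 < p) :
    AsympTranslationInvariant (cappedLpPenalty B γ p) := by
  intro ρ x d hnorm hdir
  filter_upwards [eventually_all.2 fun i => eventually_comp_abs_apply_sub_smul_eq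
    (eventually_min_mul_rpow_eq_one hγ hp) ((LinearMap.proj i).comp B.mulVecLin) ρ hnorm hdir]
    with k hk
  simp only [LinearMap.coe_comp, Function.comp_apply, Matrix.mulVecLin_apply,
    LinearMap.coe_proj, Function.eval] at hk
  simp only [cappedLpPenalty, hk]

end cappedLpPenalty

lemma LowerSemicontinuous.add_coe {α : Type*} [TopologicalSpace α] {f : α → EReal} {g : α → ℝ}
    (hf : LowerSemicontinuous f) (hg : Continuous g) :
    LowerSemicontinuous fun x => f x + (g x : EReal) :=
  hf.add' (continuous_coe_real_ereal.comp hg).lowerSemicontinuous fun _ =>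
    EReal.continuousAt_add (.inr (EReal.coe_ne_bot _)) (.inr (EReal.coe_ne_top _))

lemma LowerSemicontinuous.le_of_tendsto {α : Type*} [TopologicalSpace α] {f : α → EReal}
    (hf : LowerSemicontinuous f) {y : ℕ → α} {xs : α} (hy : Tendsto y atTop (𝓝 xs))
    {t : ℕ → ℝ} {a : ℝ} (ht : Tendsto t atTop (𝓝 a)) (hfy : ∀ k, f (y k) ≤ (t k : EReal)) :
    f xs ≤ a :=
  calc f xs ≤ liminf f (𝓝 xs) := hf.le_liminf xs
    _ ≤ liminf (f ∘ y) atTop := hy.liminf_le_liminf_comp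
    _ ≤ liminf (fun k => (t k : EReal)) atTop := liminf_le_liminf (.of_forall hfy)
    _ = a := ((continuous_coe_real_ereal.tendsto a).comp ht).liminf_eq

lemma ALS.not_tendsto_l2_atTop {f : (Fin n → ℝ) → EReal} (hals : ALS f) {c : ℝ}
    (hc : ∀ x, (c : EReal) ≤ f x) {t : ℕ → ℝ} {M : ℝ} (hM : ∀ k, |t k| ≤ M)
    {x : ℕ → Fin n → ℝ} (hfx : ∀ k, f (x k) ≤ (t k : EReal))
    (hmin : ∀ k y, f y ≤ (t k : EReal) → l2 (x k) ≤ l2 y) :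
    ¬ Tendsto (fun k => l2 (x k)) atTop atTop := by
  intro hnorm
  obtain ⟨d, σ, hσ, hdir⟩ := exists_tendsto_subseq_of_frequently_l2_le (R := 1)
    (x := fun k => (l2 (x k))⁻¹ • x k) <| Eventually.frequently <| by
      filter_upwards [hnorm.eventually_gt_atTop 0] with k hk
      rw [l2_eq_norm, WithLp.toLp_smul, norm_smul, ← l2_eq_norm,
        Real.norm_of_nonneg (inv_nonneg.2 hk.le), inv_mul_cancel₀ hk.ne']
  have hnormσ := hnorm.comp hσ.tendsto_atTop
  obtain ⟨k₀, hk₀⟩ := hals 1 one_pos (t ∘ σ) ⟨M, fun k => hM (σ k)⟩ (x ∘ σ) d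
    (fun k => hfx (σ k)) hnormσ hdir
    (asympFn_eq_zero hc (fun k => hM (σ k)) (fun k => hfx (σ k)) hnormσ hdir)
  obtain ⟨k, hk, hlt⟩ :=
    ((eventually_ge_atTop k₀).and (eventually_l2_sub_smul_lt one_pos hnormσ hdir)).exists
  exact (hmin _ _ (hk₀ k hk)).not_gt hlt

theorem ALS.exists_forall_le {f : (Fin n → ℝ) → EReal} (hlsc : LowerSemicontinuous f)
    (hals : ALS f) {c : ℝ} (hc : ∀ x, (c : EReal) ≤ f x) : ∃ xs, ∀ x, f xs ≤ f x := by
  rcases eq_or_ne (⨅ x, f x) ⊤ with htop | htop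
  · exact ⟨0, fun x => le_top.trans (htop ▸ iInf_le f x)⟩
  obtain ⟨a, ha⟩ : ∃ a : ℝ, (a : EReal) = ⨅ x, f x :=
    ⟨_, EReal.coe_toReal htop (ne_bot_of_le_ne_bot (EReal.coe_ne_bot c) (le_iInf hc))⟩
  set t : ℕ → ℝ := fun k => a + 1 / (k + 1)
  have ht : Tendsto t atTop (𝓝 a) := by
    simpa [t] using (tendsto_const_nhds (x := a)).add tendsto_one_div_add_atTop_nhds_zero_nat
  have hM (k : ℕ) : |t k| ≤ |a| + 1 := by
    refine (abs_add_le _ _).trans (add_le_add_right ?_ _)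
    rw [abs_of_pos (by positivity), div_le_one (by positivity)]
    simp
  have hx (k : ℕ) : ∃ x, f x ≤ (t k : EReal) ∧ ∀ y, f y ≤ (t k : EReal) → l2 x ≤ l2 y := by
    obtain ⟨y, hy⟩ := iInf_lt_iff.1 (ha ▸ EReal.coe_lt_coe_iff.2 (lt_add_of_pos_right a
      (by positivity : (0 : ℝ) < 1 / (k + 1))))
    obtain ⟨x, hx, hmin⟩ := exists_isMinOn_l2 (hlsc.isClosed_preimage _) ⟨y, hy.le⟩
    exact ⟨x, hx, fun y hy => hmin hy⟩
  choose x hfx hmin using hx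
  obtain ⟨R, hR⟩ : ∃ R, ∃ᶠ k in atTop, l2 (x k) ≤ R := by
    have hbdd := hals.not_tendsto_l2_atTop hc hM hfx hmin
    simp only [tendsto_atTop, not_forall, not_eventually, not_le] at hbdd
    obtain ⟨R, hR⟩ := hbdd
    exact ⟨R, hR.mono fun _ => le_of_lt⟩
  obtain ⟨xs, σ, hσ, hlim⟩ := exists_tendsto_subseq_of_frequently_l2_le hR
  exact ⟨xs, fun y => (hlsc.le_of_tendsto hlim (ht.comp hσ.tendsto_atTop)
    fun k => hfx (σ k)).trans (ha ▸ iInf_le f y)⟩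

end

theorem Psi_ALS_and_attains_general (n m : ℕ) (φ : (Fin n → ℝ) → EReal)
    (hlsc : LowerSemicontinuous φ) (hals : ALS φ)
    (hbdd : ∃ c : ℝ, ∀ x, (c : EReal) ≤ φ x)
    (B : Matrix (Fin m) (Fin n) ℝ) (lam γ p : ℝ)
    (hγ : 0 < γ) (hp : 0 < p) :
    ALS (Psi φ B lam γ p) ∧
    (∃ c : ℝ, ∀ x, (c : EReal) ≤ Psi φ B lam γ p x) ∧
    (∃ xs : Fin n → ℝ, ∀ x, Psi φ B lam γ p xs ≤ Psi φ B lam γ p x) := by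
  obtain ⟨c, hc⟩ := hbdd
  have hpen := abs_mul_cappedLpPenalty_le B lam hγ.le p
  have hPsi_als : ALS (Psi φ B lam γ p) :=
    hals.add hc hpen ((asympTranslationInvariant_cappedLpPenalty B hγ hp).const_mul lam)
  have hPsi_ge (x : Fin n → ℝ) : ((c - |lam| * m : ℝ) : EReal) ≤ Psi φ B lam γ p x := by
    rw [sub_eq_add_neg, EReal.coe_add]
    exact add_le_add (hc x) (EReal.coe_le_coe_iff.2 (neg_le_of_abs_le (hpen x)))
  have hPsi_lsc : LowerSemicontinuous (Psi φ B lam γ p) :=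
    hlsc.add_coe (continuous_const.mul (continuous_cappedLpPenalty B γ hp))
  exact ⟨hPsi_als, ⟨_, hPsi_ge⟩, hPsi_als.exists_forall_le hPsi_lsc hPsi_ge⟩

/-- If `φ` is proper, lsc, asymptotically level stable and bounded below, then `Ψ_γ` is
asymptotically level stable and bounded below, and attains its infimum. -/
theorem Psi_ALS_and_attains (n m : ℕ) (φ : (Fin n → ℝ) → EReal)
    (hproper : ∃ x, φ x ≠ ⊤) (hnb : ∀ x, φ x ≠ ⊥)
    (hlsc : LowerSemicontinuous φ) (hals : ALS φ)
    (hbdd : ∃ c : ℝ, ∀ x, (c : EReal) ≤ φ x)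
    (B : Matrix (Fin m) (Fin n) ℝ) (lam γ p : ℝ)
    (hlam : 0 < lam) (hγ : 0 < γ) (hp : 0 < p) :
    ALS (Psi φ B lam γ p) ∧
    (∃ c : ℝ, ∀ x, (c : EReal) ≤ Psi φ B lam γ p x) ∧
    (∃ xs : Fin n → ℝ, ∀ x, Psi φ B lam γ p xs ≤ Psi φ B lam γ p x) :=
  Psi_ALS_and_attains_general n m φ hlsc hals hbdd B lam γ p hγ hp
end
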